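/- arXiv:1308.5766 — 2 statements merged into one kernel-verified Lean document; each statement's English description precedes it below -/
import Mathlib

section
/- (Toft) For even n ≥ 4, m(n) ≤ 2^{n-1} + C(n, n/2)/2 + n · m(n-2), where C(n,k) denotes the binomial coefficient. -/
/-- A family of finsets is `n`-uniform if every hyperedge has `n` elements. -/
def IsUniform (n : ℕ) (E : Finset (Finset ℕ)) : Prop := ∀ e ∈ E, e.card = n

/-- A hypergraph (family of hyperedges) is 2-colorable if there is a Red/Blue
coloring of the vertices such that no hyperedge is monochromatic. -/
def Colorable2 (E : Finset (Finset ℕ)) : Prop :=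
  ∃ χ : ℕ → Bool, ∀ e ∈ E, (∃ v ∈ e, χ v = true) ∧ (∃ v ∈ e, χ v = false)

/-- `m n` is the least number of hyperedges in a non-2-colorable `n`-uniform hypergraph. -/
noncomputable def m (n : ℕ) : ℕ :=
  sInf {k | ∃ E : Finset (Finset ℕ), IsUniform n E ∧ ¬ Colorable2 E ∧ E.card = k}

/-- A hyperedge is monochromatic under `χ` if all its vertices get the same color. -/
def Mono (χ : ℕ → Bool) (s : Finset ℕ) : Prop :=
  (∀ x ∈ s, χ x = true) ∨ (∀ x ∈ s, χ x = false)

/-!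
Put pairs `{uᵢ, vᵢ} = {i, i + n}` (`i < n`) next to a copy of a minimal non-2-colorable
`(n-2)`-uniform `E₀`, and take the `n · m(n-2)` edges `e ∪ {uᵢ, vᵢ}` together with the
edges `U_J ∪ V_{[n]∖J}` for `J` of odd size `≤ n/2` or of even size `≥ n/2`. Complementing
the even `J` indexes the latter by the `J` with `|J| ≤ n/2`, of which there are
`2^{n-1} + C(n, n/2)/2`.

In any colouring some `e ∈ E₀` is monochromatic, of colour `c` say. Unless some pair is
entirely `c`, every pair meets the other colour `c'`, i.e. `A = {i | vᵢ ≠ c'}` is contained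
in `B = {i | uᵢ = c'}`; and `U_J ∪ V_{[n]∖J}` has colour `c'` as soon as `A ⊆ J ⊆ B`.
If `A ⊊ B`, one of the sizes `|A|`, `|A| + 1` is admissible; if `A = B`, either `J = A` is
admissible or `J = [n] ∖ A` is, and the latter edge has colour `c`.
-/

open Finset

lemma mono_iff_exists_forall_eq {χ : ℕ → Bool} {s : Finset ℕ} :
    Mono χ s ↔ ∃ c, ∀ x ∈ s, χ x = c := by
  simp [Mono, Bool.exists_bool, or_comm]

lemma not_mono_iff {χ : ℕ → Bool} {s : Finset ℕ} :
    ¬ Mono χ s ↔ (∃ v ∈ s, χ v = true) ∧ (∃ v ∈ s, χ v = false) := by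
  simp [Mono, and_comm]

lemma not_colorable2_iff {E : Finset (Finset ℕ)} :
    ¬ Colorable2 E ↔ ∀ χ : ℕ → Bool, ∃ e ∈ E, Mono χ e := by
  simp only [Colorable2, ← not_mono_iff]
  push Not
  rfl

lemma m_le_card {n : ℕ} {E : Finset (Finset ℕ)} (hu : IsUniform n E) (hE : ¬ Colorable2 E) :
    m n ≤ E.card :=
  Nat.sInf_le ⟨E, hu, hE, rfl⟩

lemma not_colorable2_powersetCard_range (k : ℕ) :
    ¬ Colorable2 (powersetCard k (range (2 * k - 1))) := by
  refine not_colorable2_iff.mpr fun χ => ?_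
  have hsplit := card_filter_add_card_filter_not (s := range (2 * k - 1)) (χ · = true)
  obtain ⟨c, hc⟩ : ∃ c, k ≤ ((range (2 * k - 1)).filter (χ · = c)).card := by
    by_contra! hlt
    have ht := hlt true
    have hf := hlt false
    simp only [Bool.not_eq_true, card_range] at hsplit
    omega
  obtain ⟨e, he, rfl⟩ := exists_subset_card_eq hc
  exact ⟨e, mem_powersetCard.mpr ⟨he.trans (filter_subset _ _), rfl⟩,
    mono_iff_exists_forall_eq.mpr ⟨c, fun x hx => (mem_filter.mp (he hx)).2⟩⟩

lemma exists_card_eq_m (k : ℕ) : ∃ E, IsUniform k E ∧ ¬ Colorable2 E ∧ E.card = m k := by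
  have hne : {j | ∃ E, IsUniform k E ∧ ¬ Colorable2 E ∧ E.card = j}.Nonempty :=
    ⟨_, _, fun _ he => (mem_powersetCard.mp he).2,
    not_colorable2_powersetCard_range k, rfl⟩
  exact Nat.sInf_mem hne

-- The sizes `|J|` for which `crossEdge n J ∈ crossEdges n`, with `h = n / 2`.
def AdmissibleSize (h k : ℕ) : Prop := Odd k ∧ k ≤ h ∨ Even k ∧ h ≤ k

lemma exists_admissibleSize_mem_Icc (h a : ℕ) : ∃ k ∈ Icc a (a + 1), AdmissibleSize h k := by
  rcases Nat.even_or_odd a with ha | ha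
  · by_cases hah : a < h
    · exact ⟨a + 1, by simp, Or.inl ⟨ha.add_one, hah⟩⟩
    · exact ⟨a, by simp, Or.inr ⟨ha, by omega⟩⟩
  · by_cases hah : a ≤ h
    · exact ⟨a, by simp, Or.inl ⟨ha, hah⟩⟩
    · exact ⟨a + 1, by simp, Or.inr ⟨ha.add_one, by omega⟩⟩

lemma admissibleSize_or_admissibleSize_two_mul_sub {h k : ℕ} (hk : k ≤ 2 * h) :
    AdmissibleSize h k ∨ AdmissibleSize h (2 * h - k) := by
  have hpar : Even (2 * h - k) ↔ Even k := by
    rw [Nat.even_sub hk]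
    simp
  rcases Nat.even_or_odd k with hev | hodd
  · by_cases hkh : h ≤ k
    · exact Or.inl (Or.inr ⟨hev, hkh⟩)
    · exact Or.inr (Or.inr ⟨hpar.mpr hev, by omega⟩)
  · by_cases hkh : k ≤ h
    · exact Or.inl (Or.inl ⟨hodd, hkh⟩)
    · refine Or.inr (Or.inl ⟨?_, by omega⟩)
      rw [← Nat.not_even_iff_odd, hpar, Nat.not_even_iff_odd]
      exact hodd

lemma exists_admissibleSize_subset_between {α : Type*} {A B : Finset α} (hAB : A ⊆ B)
    (hlt : A.card < B.card) (h : ℕ) : ∃ J, A ⊆ J ∧ J ⊆ B ∧ AdmissibleSize h J.card := by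
  obtain ⟨k, hk, hadm⟩ := exists_admissibleSize_mem_Icc h A.card
  rw [mem_Icc] at hk
  obtain ⟨J, hAJ, hJB, rfl⟩ := exists_subsuperset_card_eq hAB hk.1 (by omega)
  exact ⟨J, hAJ, hJB, hadm⟩

lemma card_filter_powerset_card_le {α : Type*} (s : Finset α) (h : ℕ) :
    (s.powerset.filter (·.card ≤ h)).card = ∑ k ∈ range (h + 1), s.card.choose k := by
  rw [card_eq_sum_card_fiberwise (f := Finset.card) (t := range (h + 1))
    fun t ht => mem_range.mpr (Nat.lt_succ_of_le (mem_filter.mp ht).2)]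
  refine sum_congr rfl fun k hk => ?_
  rw [← card_powersetCard, powersetCard_eq_filter, filter_filter]
  refine congrArg card (filter_congr fun t _ => and_iff_right_of_imp fun htk => ?_)
  rw [mem_range] at hk
  omega

lemma two_mul_sum_range_choose_half (m : ℕ) :
    2 * ∑ i ∈ range (m + 1), (2 * m).choose i = 4 ^ m + (2 * m).choose m := by
  have hreflect : ∑ i ∈ range (m + 1), (2 * m).choose i =
      ∑ i ∈ Ico m (2 * m + 1), (2 * m).choose i := by
    calc ∑ i ∈ range (m + 1), (2 * m).choose i
        = ∑ i ∈ Ico 0 (m + 1), (2 * m).choose (2 * m - i) := by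
          rw [range_eq_Ico]
          exact sum_congr rfl fun i hi => (Nat.choose_symm (by rw [mem_Ico] at hi; omega)).symm
      _ = ∑ i ∈ Ico m (2 * m + 1), (2 * m).choose i := by
          rw [sum_Ico_reflect _ _ (by omega)]
          congr 2
          omega
  have htotal : ∑ i ∈ range m, (2 * m).choose i + ∑ i ∈ Ico m (2 * m + 1), (2 * m).choose i
      = 4 ^ m := by
    rw [sum_range_add_sum_Ico _ (by omega), Nat.sum_range_choose, pow_mul]
    norm_num
  have hlast := sum_range_succ (fun i => (2 * m).choose i) m
  omega

lemma sum_range_choose_half_of_even {n : ℕ} (heven : Even n) :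
    ∑ k ∈ range (n / 2 + 1), n.choose k = 2 ^ (n - 1) + n.choose (n / 2) / 2 := by
  obtain ⟨_ | m, rfl⟩ := heven
  · rfl
  have hsum := two_mul_sum_range_choose_half (m + 1)
  have hcentral := Nat.two_dvd_centralBinom_succ m
  rw [Nat.centralBinom_eq_two_mul_choose] at hcentral
  have hpow : 4 ^ (m + 1) = 2 * 2 ^ (2 * m + 1) := by
    rw [pow_succ, pow_succ, pow_mul]
    norm_num
    ring
  rw [show m + 1 + (m + 1) = 2 * (m + 1) by ring, Nat.mul_div_cancel_left _ two_pos,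
    show 2 * (m + 1) - 1 = 2 * m + 1 by omega]
  omega

section Construction

variable {n : ℕ}

-- `U_J ∪ V_{[n]∖J}`, where `uᵢ = i` and `vᵢ = i + n`.
def crossEdge (n : ℕ) (J : Finset ℕ) : Finset ℕ := J ∪ (range n \ J).image (· + n)

-- For odd `|K|` the Abbott–Hanson edge `U_K ∪ (V ∖ V_K)`,
-- for even `|K|` the edge `V_K ∪ (U ∖ U_K)`.
def crossEdges (n : ℕ) : Finset (Finset ℕ) :=
  ((range n).powerset.filter (·.card ≤ n / 2)).image
    fun K => crossEdge n (if Odd K.card then K else range n \ K)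

def pairEdge (n : ℕ) (e : Finset ℕ) (i : ℕ) : Finset ℕ :=
  e.image (· + 2 * n) ∪ {i, i + n}

def pairEdges (n : ℕ) (E₀ : Finset (Finset ℕ)) : Finset (Finset ℕ) :=
  (E₀ ×ˢ range n).image fun p => pairEdge n p.1 p.2

def toftHypergraph (n : ℕ) (E₀ : Finset (Finset ℕ)) : Finset (Finset ℕ) :=
  crossEdges n ∪ pairEdges n E₀

lemma card_crossEdge {J : Finset ℕ} (hJ : J ⊆ range n) : (crossEdge n J).card = n := by
  have hdisj : Disjoint J ((range n \ J).image (· + n)) := by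
    rw [disjoint_left]
    intro x hx hx'
    obtain ⟨y, -, rfl⟩ := mem_image.mp hx'
    have := mem_range.mp (hJ hx)
    omega
  have hJn := card_le_card hJ
  rw [card_range] at hJn
  rw [crossEdge, card_union_of_disjoint hdisj, card_image_of_injective _ (add_left_injective n),
    card_sdiff_of_subset hJ, card_range]
  omega

lemma forall_crossEdge_eq {χ : ℕ → Bool} {c : Bool} {J : Finset ℕ}
    (hJB : J ⊆ (range n).filter (χ · = c))
    (hAJ : (range n).filter (fun i => χ (i + n) ≠ c) ⊆ J) :
    ∀ x ∈ crossEdge n J, χ x = c := by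
  intro x hx
  rcases mem_union.mp hx with hx | hx
  · exact (mem_filter.mp (hJB hx)).2
  · obtain ⟨i, hi, rfl⟩ := mem_image.mp hx
    obtain ⟨hi, hiJ⟩ := mem_sdiff.mp hi
    by_contra hne
    exact hiJ (hAJ (mem_filter.mpr ⟨hi, hne⟩))

lemma exists_mono_crossEdge (heven : Even n) (χ : ℕ → Bool) (c : Bool)
    (hcover : ∀ i < n, χ i = c ∨ χ (i + n) = c) :
    ∃ J ⊆ range n, AdmissibleSize (n / 2) J.card ∧ Mono χ (crossEdge n J) := by
  set A := (range n).filter (fun i => χ (i + n) ≠ c)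
  set B := (range n).filter (χ · = c)
  have hAB : A ⊆ B := by
    intro i hi
    obtain ⟨hi, hne⟩ := mem_filter.mp hi
    exact mem_filter.mpr ⟨hi, (hcover i (mem_range.mp hi)).resolve_right hne⟩
  have hBn : B ⊆ range n := filter_subset _ _
  rcases (card_le_card hAB).lt_or_eq with hlt | heq
  · obtain ⟨J, hAJ, hJB, hadm⟩ := exists_admissibleSize_subset_between hAB hlt (n / 2)
    exact ⟨J, hJB.trans hBn, hadm,
      mono_iff_exists_forall_eq.mpr ⟨c, forall_crossEdge_eq hJB hAJ⟩⟩
  have hA : A = B := eq_of_subset_of_card_le hAB heq.ge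
  have hAn : A.card ≤ n := card_range n ▸ card_le_card (hAB.trans hBn)
  obtain ⟨h, rfl⟩ := heven.two_dvd
  rw [Nat.mul_div_cancel_left h two_pos]
  rcases admissibleSize_or_admissibleSize_two_mul_sub hAn with hadm | hadm
  · exact ⟨A, hAB.trans hBn, hadm,
      mono_iff_exists_forall_eq.mpr ⟨c, forall_crossEdge_eq hAB subset_rfl⟩⟩
  -- `A = B` makes the complementary edge monochromatic in the other colour
  refine ⟨range (2 * h) \ A, sdiff_subset, ?_,
    mono_iff_exists_forall_eq.mpr ⟨!c, forall_crossEdge_eq ?_ ?_⟩⟩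
  · rwa [card_sdiff_of_subset (hAB.trans hBn), card_range]
  · intro i hi
    obtain ⟨hi, hiA⟩ := mem_sdiff.mp hi
    rw [hA, mem_filter, not_and] at hiA
    exact mem_filter.mpr ⟨hi, Bool.eq_not.mpr (hiA hi)⟩
  · intro i hi
    obtain ⟨hi, hne⟩ := mem_filter.mp hi
    exact mem_sdiff.mpr ⟨hi, fun hiA => (mem_filter.mp hiA).2 (Bool.ne_not.mp hne)⟩

lemma crossEdge_mem_crossEdges (heven : Even n) {J : Finset ℕ} (hJ : J ⊆ range n)
    (hadm : AdmissibleSize (n / 2) J.card) : crossEdge n J ∈ crossEdges n := by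
  rcases hadm with ⟨hodd, hle⟩ | ⟨hev, hge⟩
  · exact mem_image.mpr ⟨J, mem_filter.mpr ⟨mem_powerset.mpr hJ, hle⟩, by rw [if_pos hodd]⟩
  have hJn : J.card ≤ n := card_range n ▸ card_le_card hJ
  have hcard : (range n \ J).card = n - J.card := by rw [card_sdiff_of_subset hJ, card_range]
  have hcompl : ¬ Odd (range n \ J).card := by
    rw [hcard, Nat.not_odd_iff_even, Nat.even_sub hJn]
    exact iff_of_true heven hev
  refine mem_image.mpr ⟨range n \ J, mem_filter.mpr ⟨mem_powerset.mpr sdiff_subset, ?_⟩, ?_⟩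
  · have := Nat.two_mul_div_two_of_even heven
    omega
  · rw [if_neg hcompl, Finset.sdiff_sdiff_eq_self hJ]

lemma card_crossEdges_le (n : ℕ) :
    (crossEdges n).card ≤ ∑ k ∈ range (n / 2 + 1), n.choose k := by
  calc (crossEdges n).card ≤ ((range n).powerset.filter (·.card ≤ n / 2)).card := card_image_le
    _ = ∑ k ∈ range (n / 2 + 1), n.choose k := by rw [card_filter_powerset_card_le, card_range]

lemma card_pairEdge (hn : 2 ≤ n) {e : Finset ℕ} (he : e.card = n - 2) {i : ℕ} (hi : i < n) :
    (pairEdge n e i).card = n := by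
  have hdisj : Disjoint (e.image (· + 2 * n)) {i, i + n} := by
    rw [disjoint_left]
    intro x hx hx'
    obtain ⟨y, -, rfl⟩ := mem_image.mp hx
    simp only [mem_insert, mem_singleton] at hx'
    omega
  rw [pairEdge, card_union_of_disjoint hdisj, card_image_of_injective _ (add_left_injective _), he,
    card_pair (by omega)]
  omega

lemma forall_pairEdge_eq {χ : ℕ → Bool} {c : Bool} {e : Finset ℕ} {i : ℕ}
    (he : ∀ x ∈ e, χ (x + 2 * n) = c) (hu : χ i = c) (hv : χ (i + n) = c) :
    ∀ x ∈ pairEdge n e i, χ x = c := by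
  intro x hx
  rcases mem_union.mp hx with hx | hx
  · obtain ⟨y, hy, rfl⟩ := mem_image.mp hx
    exact he y hy
  · rcases mem_insert.mp hx with rfl | hx
    · exact hu
    · rw [mem_singleton.mp hx]
      exact hv

lemma isUniform_toftHypergraph (hn : 2 ≤ n) {E₀ : Finset (Finset ℕ)}
    (hE₀ : IsUniform (n - 2) E₀) :
    IsUniform n (toftHypergraph n E₀) := by
  intro e he
  rcases mem_union.mp he with he | he
  · obtain ⟨K, hK, rfl⟩ := mem_image.mp he
    refine card_crossEdge ?_
    split_ifs
    · exact mem_powerset.mp (mem_filter.mp hK).1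
    · exact sdiff_subset
  · obtain ⟨⟨e₀, i⟩, hp, rfl⟩ := mem_image.mp he
    obtain ⟨he₀, hi⟩ := mem_product.mp hp
    exact card_pairEdge hn (hE₀ e₀ he₀) (mem_range.mp hi)

lemma not_colorable2_toftHypergraph (heven : Even n) {E₀ : Finset (Finset ℕ)}
    (hE₀ : ¬ Colorable2 E₀) : ¬ Colorable2 (toftHypergraph n E₀) := by
  refine not_colorable2_iff.mpr fun χ => ?_
  obtain ⟨e₀, he₀, hmono⟩ := not_colorable2_iff.mp hE₀ (fun x => χ (x + 2 * n))
  obtain ⟨c, hc⟩ := mono_iff_exists_forall_eq.mp hmono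
  by_cases hpair : ∃ i < n, χ i = c ∧ χ (i + n) = c
  · obtain ⟨i, hi, hu, hv⟩ := hpair
    refine ⟨pairEdge n e₀ i, mem_union_right _ ?_, mono_iff_exists_forall_eq.mpr
      ⟨c, forall_pairEdge_eq hc hu hv⟩⟩
    exact mem_image.mpr ⟨(e₀, i), mem_product.mpr ⟨he₀, mem_range.mpr hi⟩, rfl⟩
  · push Not at hpair
    have hcover : ∀ i < n, χ i = !c ∨ χ (i + n) = !c := by
      intro i hi
      by_cases hu : χ i = c
      · exact Or.inr (Bool.eq_not.mpr (hpair i hi hu))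
      · exact Or.inl (Bool.eq_not.mpr hu)
    obtain ⟨J, hJ, hadm, hmono⟩ := exists_mono_crossEdge heven χ (!c) hcover
    exact ⟨_, mem_union_left _ (crossEdge_mem_crossEdges heven hJ hadm), hmono⟩

lemma card_toftHypergraph_le (n : ℕ) (E₀ : Finset (Finset ℕ)) :
    (toftHypergraph n E₀).card ≤ ∑ k ∈ range (n / 2 + 1), n.choose k + n * E₀.card := by
  calc (toftHypergraph n E₀).card
      ≤ (crossEdges n).card + (pairEdges n E₀).card := card_union_le _ _
    _ ≤ ∑ k ∈ range (n / 2 + 1), n.choose k + n * E₀.card := by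
      gcongr
      · exact card_crossEdges_le n
      · exact card_image_le.trans (by rw [card_product, card_range, mul_comm])

end Construction

/-- Toft: for even `n ≥ 4`, `m n ≤ 2 ^ (n - 1) + (n choose n/2) / 2 + n * m (n - 2)`. -/
theorem toft_recurrence (n : ℕ) (hn : 4 ≤ n) (heven : Even n) :
    m n ≤ 2 ^ (n - 1) + Nat.choose n (n / 2) / 2 + n * m (n - 2) := by
  obtain ⟨E₀, hu, hE₀, hcard⟩ := exists_card_eq_m (n - 2)
  have huniform := isUniform_toftHypergraph (by omega) hu
  calc m n ≤ (toftHypergraph n E₀).card :=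
        m_le_card huniform (not_colorable2_toftHypergraph heven hE₀)
    _ ≤ ∑ k ∈ range (n / 2 + 1), n.choose k + n * E₀.card := card_toftHypergraph_le n E₀
    _ = 2 ^ (n - 1) + Nat.choose n (n / 2) / 2 + n * m (n - 2) := by
      rw [sum_range_choose_half_of_even heven, hcard]
end

section
/- For even n ≥ 4, m(n) ≤ (n+1) · 2^{n-2} + C(n, n/2)/2 + (n-1) · ( m(n-2) + C(n-2, (n-2)/2) ). -/
namespace FIE

/-- "Γ-edge": for `S ⊆ range n`, the transversal edge `S ∪ (n + (range n \ S))`. -/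
def gE (n : ℕ) (S : Finset ℕ) : Finset ℕ :=
  S ∪ (Finset.range n \ S).image (fun i => n + i)

/-- "C-edge": base edge together with the pair `{j, n+j}`. -/
def cE (n : ℕ) (e : Finset ℕ) (j : ℕ) : Finset ℕ := e ∪ {j, n + j}

/-- "D-edge": the pair `{j, n+j}` with a transversal of the remaining pairs below `n-1`. -/
def dE (n : ℕ) (j : ℕ) (P : Finset ℕ) : Finset ℕ :=
  {j, n + j} ∪ P ∪ (((Finset.range (n-1)).erase j) \ P).image (fun i => n + i)

/-- The full construction. -/
def H (n : ℕ) (B : Finset (Finset ℕ)) : Finset (Finset ℕ) :=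
  (Finset.range n).powerset.image (gE n)
  ∪ (B ×ˢ Finset.range (n-1)).image (fun p => cE n p.1 p.2)
  ∪ ((Finset.range (n-1)).sigma (fun j => ((Finset.range (n-1)).erase j).powerset)).image
      (fun p => dE n p.1 p.2)

lemma gE_card (n : ℕ) {S : Finset ℕ} (hS : S ⊆ Finset.range n) :
    (gE n S).card = n := by
  have hinj : Function.Injective (fun i : ℕ => n + i) := fun a b h => Nat.add_left_cancel h
  have hdisj : Disjoint S ((Finset.range n \ S).image (fun i => n + i)) := by
    rw [Finset.disjoint_left]
    intro a haS haI
    obtain ⟨i, _, rfl⟩ := Finset.mem_image.1 haI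
    have := Finset.mem_range.1 (hS haS)
    omega
  rw [gE, Finset.card_union_of_disjoint hdisj, Finset.card_image_of_injective _ hinj,
    Finset.card_sdiff_of_subset hS, Finset.card_range]
  have := Finset.card_le_card hS
  rw [Finset.card_range] at this
  omega

lemma cE_card (n : ℕ) (hn : 4 ≤ n) {e : Finset ℕ} (he : e.card = n-2)
    (hev : ∀ v ∈ e, 2*n ≤ v) {j : ℕ} (hj : j < n-1) : (cE n e j).card = n := by
  have hdisj : Disjoint e ({j, n+j} : Finset ℕ) := by
    rw [Finset.disjoint_left]; intro a ha hmem
    have := hev a ha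
    rcases Finset.mem_insert.1 hmem with rfl | h
    · omega
    · rw [Finset.mem_singleton] at h; omega
  have h2 : ({j, n+j} : Finset ℕ).card = 2 := by
    rw [Finset.card_insert_of_notMem (by simp; omega), Finset.card_singleton]
  rw [cE, Finset.card_union_of_disjoint hdisj, he, h2]
  omega

lemma dE_card (n : ℕ) (hn : 4 ≤ n) {j : ℕ} (hj : j < n-1) {P : Finset ℕ}
    (hP : P ⊆ (Finset.range (n-1)).erase j) : (dE n j P).card = n := by
  have hPr : ∀ a ∈ P, a < n-1 ∧ a ≠ j := by
    intro a ha
    have h := hP ha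
    rw [Finset.mem_erase] at h
    exact ⟨Finset.mem_range.1 h.2, h.1⟩
  have h1 : ({j, n+j} : Finset ℕ).card = 2 := by
    rw [Finset.card_insert_of_notMem (by simp; omega), Finset.card_singleton]
  have hd1 : Disjoint ({j, n+j} : Finset ℕ) P := by
    rw [Finset.disjoint_left]; intro a ha haP
    obtain ⟨h2, h3⟩ := hPr a haP
    rcases Finset.mem_insert.1 ha with rfl | h
    · exact h3 rfl
    · rw [Finset.mem_singleton] at h; omega
  have hd2 : Disjoint (({j, n+j} : Finset ℕ) ∪ P)
      ((((Finset.range (n-1)).erase j) \ P).image (fun i => n + i)) := by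
    rw [Finset.disjoint_left]; intro a ha haI
    obtain ⟨i, hi, rfl⟩ := Finset.mem_image.1 haI
    obtain ⟨hi1, _⟩ := Finset.mem_sdiff.1 hi
    rw [Finset.mem_erase] at hi1
    have hilt := Finset.mem_range.1 hi1.2
    rcases Finset.mem_union.1 ha with h | h
    · rcases Finset.mem_insert.1 h with h' | h'
      · omega
      · rw [Finset.mem_singleton] at h'
        exact hi1.1 (by omega)
    · have := (hPr _ h).1; omega
  have hinj : Function.Injective (fun i : ℕ => n + i) := fun a b h => Nat.add_left_cancel h
  have hcP : P.card ≤ n - 2 := by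
    have h := Finset.card_le_card hP
    rw [Finset.card_erase_of_mem (Finset.mem_range.2 hj), Finset.card_range] at h
    omega
  rw [dE, Finset.card_union_of_disjoint hd2, Finset.card_union_of_disjoint hd1, h1,
    Finset.card_image_of_injective _ hinj, Finset.card_sdiff_of_subset hP,
    Finset.card_erase_of_mem (Finset.mem_range.2 hj), Finset.card_range]
  omega

lemma H_uniform (n : ℕ) (hn : 4 ≤ n) (B : Finset (Finset ℕ))
    (hBu : IsUniform (n-2) B) (hBv : ∀ e ∈ B, ∀ v ∈ e, 2*n ≤ v) :
    IsUniform n (H n B) := by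
  intro f hf
  rcases Finset.mem_union.1 hf with hf' | hf'
  · rcases Finset.mem_union.1 hf' with hg | hc
    · obtain ⟨S, hS, rfl⟩ := Finset.mem_image.1 hg
      exact gE_card n (Finset.mem_powerset.1 hS)
    · obtain ⟨p, hp, rfl⟩ := Finset.mem_image.1 hc
      obtain ⟨hp1, hp2⟩ := Finset.mem_product.1 hp
      exact cE_card n hn (hBu _ hp1) (hBv _ hp1) (Finset.mem_range.1 hp2)
  · obtain ⟨p, hp, rfl⟩ := Finset.mem_image.1 hf'
    rw [Finset.mem_sigma] at hp
    exact dE_card n hn (Finset.mem_range.1 hp.1) (Finset.mem_powerset.1 hp.2)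

lemma H_card (n : ℕ) (B : Finset (Finset ℕ)) :
    (H n B).card ≤ 2^n + B.card * (n-1) + (n-1) * 2^(n-2) := by
  refine le_trans (Finset.card_union_le _ _) ?_
  have h1 : ((Finset.range n).powerset.image (gE n)).card ≤ 2^n := by
    refine le_trans (Finset.card_image_le) ?_
    rw [Finset.card_powerset, Finset.card_range]
  have h2 : ((B ×ˢ Finset.range (n-1)).image (fun p => cE n p.1 p.2)).card
      ≤ B.card * (n-1) := by
    refine le_trans (Finset.card_image_le) ?_
    rw [Finset.card_product, Finset.card_range]
  have h3 : (((Finset.range (n-1)).sigma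
        (fun j => ((Finset.range (n-1)).erase j).powerset)).image
        (fun p => dE n p.1 p.2)).card ≤ (n-1) * 2^(n-2) := by
    refine le_trans (Finset.card_image_le) ?_
    rw [Finset.card_sigma]
    have : ∀ j ∈ Finset.range (n-1),
        (((Finset.range (n-1)).erase j).powerset).card = 2^(n-2) := by
      intro j hj
      rw [Finset.card_powerset, Finset.card_erase_of_mem hj, Finset.card_range, Nat.sub_sub]
    have h4 : ∑ j ∈ Finset.range (n-1), (((Finset.range (n-1)).erase j).powerset).card
        = (n-1) * 2^(n-2) := by
      rw [Finset.sum_congr rfl this, Finset.sum_const, Finset.card_range, smul_eq_mul]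
    rw [h4]
  have := Finset.card_union_le ((Finset.range n).powerset.image (gE n))
    ((B ×ˢ Finset.range (n-1)).image (fun p => cE n p.1 p.2))
  omega



lemma H_noncol (n : ℕ) (hn : 4 ≤ n) (B : Finset (Finset ℕ))
    (hBn : ¬ Colorable2 B) : ¬ Colorable2 (H n B) := by
  rintro ⟨χ, hχ⟩
  have hgmem : ∀ S : Finset ℕ, S ⊆ Finset.range n → gE n S ∈ H n B := by
    intro S hS
    exact Finset.mem_union.2 (Or.inl (Finset.mem_union.2 (Or.inl
      (Finset.mem_image_of_mem _ (Finset.mem_powerset.2 hS)))))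
  have hcmem : ∀ e ∈ B, ∀ j, j < n-1 → cE n e j ∈ H n B := by
    intro e he j hj
    refine Finset.mem_union.2 (Or.inl (Finset.mem_union.2 (Or.inr ?_)))
    exact Finset.mem_image.2 ⟨(e, j), Finset.mem_product.2 ⟨he, Finset.mem_range.2 hj⟩, rfl⟩
  have hdmem : ∀ j, j < n-1 → ∀ P, P ⊆ (Finset.range (n-1)).erase j → dE n j P ∈ H n B := by
    intro j hj P hP
    refine Finset.mem_union.2 (Or.inr ?_)
    exact Finset.mem_image.2 ⟨⟨j, P⟩,
      Finset.mem_sigma.2 ⟨Finset.mem_range.2 hj, Finset.mem_powerset.2 hP⟩, rfl⟩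
  -- a monochromatic-false pair
  obtain ⟨i₀, hi₀n, hi₀x, hi₀y⟩ : ∃ i, i < n ∧ χ i = false ∧ χ (n+i) = false := by
    obtain ⟨-, v, hv, hvf⟩ := hχ _ (hgmem ((Finset.range n).filter (fun i => χ i = true))
      (Finset.filter_subset _ _))
    rcases Finset.mem_union.1 hv with h | h
    · rw [(Finset.mem_filter.1 h).2] at hvf; cases hvf
    · obtain ⟨i, hi, rfl⟩ := Finset.mem_image.1 h
      obtain ⟨hir, hinot⟩ := Finset.mem_sdiff.1 hi
      refine ⟨i, Finset.mem_range.1 hir, ?_, hvf⟩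
      rcases Bool.eq_false_or_eq_true (χ i) with h' | h'
      · exact absurd (Finset.mem_filter.2 ⟨hir, h'⟩) hinot
      · exact h'
  -- a monochromatic-true pair
  obtain ⟨j₁, hj₁n, hj₁x, hj₁y⟩ : ∃ j, j < n ∧ χ j = true ∧ χ (n+j) = true := by
    obtain ⟨⟨v, hv, hvt⟩, -⟩ := hχ _ (hgmem ((Finset.range n).filter (fun i => χ i = false))
      (Finset.filter_subset _ _))
    rcases Finset.mem_union.1 hv with h | h
    · rw [(Finset.mem_filter.1 h).2] at hvt; cases hvt
    · obtain ⟨i, hi, rfl⟩ := Finset.mem_image.1 h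
      obtain ⟨hir, hinot⟩ := Finset.mem_sdiff.1 hi
      refine ⟨i, Finset.mem_range.1 hir, ?_, hvt⟩
      rcases Bool.eq_false_or_eq_true (χ i) with h' | h'
      · exact h'
      · exact absurd (Finset.mem_filter.2 ⟨hir, h'⟩) hinot
  -- a monochromatic base edge
  obtain ⟨e₀, he₀B, he₀⟩ : ∃ e ∈ B, (∀ v ∈ e, χ v = true) ∨ (∀ v ∈ e, χ v = false) := by
    by_contra hcon
    push_neg at hcon
    refine hBn ⟨χ, fun e he => ?_⟩
    obtain ⟨⟨v, hv, hv'⟩, ⟨w, hw, hw'⟩⟩ := hcon e he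
    exact ⟨⟨w, hw, by simpa using hw'⟩, ⟨v, hv, by simpa using hv'⟩⟩
  rcases he₀ with hT | hF
  · -- e₀ all true: no pair below n-1 is all-true
    have noTT : ∀ j, j < n-1 → χ j = false ∨ χ (n+j) = false := by
      intro j hj
      obtain ⟨-, w, hw, hwf⟩ := hχ _ (hcmem e₀ he₀B j hj)
      rcases Finset.mem_union.1 hw with h | h
      · rw [hT w h] at hwf; cases hwf
      · rcases Finset.mem_insert.1 h with rfl | h'
        · exact Or.inl hwf
        · rw [Finset.mem_singleton] at h'; subst h'; exact Or.inr hwf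
    have hj₁e : j₁ = n-1 := by
      by_contra hne
      have hj' : j₁ < n-1 := by omega
      rcases noTT j₁ hj' with h | h
      · rw [hj₁x] at h; cases h
      · rw [hj₁y] at h; cases h
    have hi₀' : i₀ < n-1 := by
      rcases Nat.lt_or_ge i₀ (n-1) with h | h
      · exact h
      · exfalso
        have hii : i₀ = j₁ := by omega
        rw [hii, hj₁x] at hi₀x; cases hi₀x
    set P := ((Finset.range (n-1)).filter (fun i => χ i = false)).erase i₀ with hPdef
    have hP : P ⊆ (Finset.range (n-1)).erase i₀ :=
      Finset.erase_subset_erase _ (Finset.filter_subset _ _)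
    obtain ⟨w, hw, hwt⟩ := (hχ _ (hdmem i₀ hi₀' P hP)).1
    have hwf : χ w = false := by
      rcases Finset.mem_union.1 hw with h | h
      · rcases Finset.mem_union.1 h with h' | h'
        · rcases Finset.mem_insert.1 h' with rfl | h''
          · exact hi₀x
          · rw [Finset.mem_singleton] at h''; subst h''; exact hi₀y
        · exact (Finset.mem_filter.1 (Finset.mem_of_mem_erase h')).2
      · obtain ⟨i, hi, rfl⟩ := Finset.mem_image.1 h
        obtain ⟨hi1, hi2⟩ := Finset.mem_sdiff.1 hi
        rw [Finset.mem_erase] at hi1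
        have hilt := Finset.mem_range.1 hi1.2
        have hxt : χ i = true := by
          rcases Bool.eq_false_or_eq_true (χ i) with h' | h'
          · exact h'
          · exact absurd (Finset.mem_erase.2 ⟨hi1.1,
              Finset.mem_filter.2 ⟨hi1.2, h'⟩⟩) hi2
        rcases noTT i hilt with h' | h'
        · rw [hxt] at h'; cases h'
        · exact h'
    rw [hwf] at hwt; cases hwt
  · -- e₀ all false: no pair below n-1 is all-false
    have noFF : ∀ j, j < n-1 → χ j = true ∨ χ (n+j) = true := by
      intro j hj
      obtain ⟨⟨w, hw, hwt⟩, -⟩ := hχ _ (hcmem e₀ he₀B j hj)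
      rcases Finset.mem_union.1 hw with h | h
      · rw [hF w h] at hwt; cases hwt
      · rcases Finset.mem_insert.1 h with rfl | h'
        · exact Or.inl hwt
        · rw [Finset.mem_singleton] at h'; subst h'; exact Or.inr hwt
    have hi₀e : i₀ = n-1 := by
      by_contra hne
      have hi' : i₀ < n-1 := by omega
      rcases noFF i₀ hi' with h | h
      · rw [hi₀x] at h; cases h
      · rw [hi₀y] at h; cases h
    have hj₁' : j₁ < n-1 := by
      rcases Nat.lt_or_ge j₁ (n-1) with h | h
      · exact h
      · exfalso
        have hii : j₁ = i₀ := by omega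
        rw [hii, hi₀x] at hj₁x; cases hj₁x
    set P := ((Finset.range (n-1)).filter (fun i => χ i = true)).erase j₁ with hPdef
    have hP : P ⊆ (Finset.range (n-1)).erase j₁ :=
      Finset.erase_subset_erase _ (Finset.filter_subset _ _)
    obtain ⟨w, hw, hwf⟩ := (hχ _ (hdmem j₁ hj₁' P hP)).2
    have hwt : χ w = true := by
      rcases Finset.mem_union.1 hw with h | h
      · rcases Finset.mem_union.1 h with h' | h'
        · rcases Finset.mem_insert.1 h' with rfl | h''
          · exact hj₁x
          · rw [Finset.mem_singleton] at h''; subst h''; exact hj₁y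
        · exact (Finset.mem_filter.1 (Finset.mem_of_mem_erase h')).2
      · obtain ⟨i, hi, rfl⟩ := Finset.mem_image.1 h
        obtain ⟨hi1, hi2⟩ := Finset.mem_sdiff.1 hi
        rw [Finset.mem_erase] at hi1
        have hilt := Finset.mem_range.1 hi1.2
        have hxf : χ i = false := by
          rcases Bool.eq_false_or_eq_true (χ i) with h' | h'
          · exact absurd (Finset.mem_erase.2 ⟨hi1.1,
              Finset.mem_filter.2 ⟨hi1.2, h'⟩⟩) hi2
          · exact h'
        rcases noFF i hilt with h' | h'
        · rw [hxf] at h'; cases h'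
        · exact h'
    rw [hwt] at hwf; cases hwf

end FIE

lemma key_binom (k : ℕ) (hk : 1 ≤ k) :
    2 ^ (2*k+1) ≤ Nat.centralBinom (k+1) / 2 + (2*k+1) * Nat.centralBinom k := by
  have h2 : Nat.centralBinom (k+1) = 2 * Nat.choose (2*k+1) k := by
    rw [Nat.centralBinom_eq_two_mul_choose]
    have e1 : 2*(k+1) = (2*k+1)+1 := by ring
    rw [e1, Nat.choose_succ_succ]
    have e2 : Nat.choose (2*k+1) (k+1) = Nat.choose (2*k+1) k := by
      have h := Nat.choose_symm (n := 2*k+1) (k := k+1) (by omega)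
      have e3 : 2*k+1 - (k+1) = k := by omega
      rw [e3] at h
      exact h.symm
    rw [e2]; ring
  have hhalf : Nat.centralBinom (k+1) / 2 = Nat.choose (2*k+1) k := by
    rw [h2, Nat.mul_div_cancel_left _ (by norm_num)]
  rw [hhalf]
  have h3 : (k+1) * Nat.choose (2*k+1) k = (2*k+1) * Nat.centralBinom k := by
    have h := Nat.add_one_mul_choose_eq (2*k) k
    have e2 : Nat.choose (2*k+1) (k+1) = Nat.choose (2*k+1) k := by
      have h' := Nat.choose_symm (n := 2*k+1) (k := k+1) (by omega)
      have e3 : 2*k+1 - (k+1) = k := by omega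
      rw [e3] at h'
      exact h'.symm
    rw [Nat.centralBinom_eq_two_mul_choose]
    rw [e2] at h
    linarith [h]
  rcases lt_or_ge k 4 with hk4 | hk4
  · interval_cases k <;> decide
  · have hb := Nat.four_pow_lt_mul_centralBinom k hk4
    refine Nat.le_of_mul_le_mul_left ?_ (show 0 < k+1 by omega)
    have expand : (k+1) * (Nat.choose (2*k+1) k + (2*k+1) * Nat.centralBinom k)
        = (2*k+1) * ((k+2) * Nat.centralBinom k) := by
      rw [Nat.mul_add, h3]; ring
    rw [expand]
    have e4 : 2 ^ (2*k+1) = 2 * 4 ^ k := by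
      rw [show (4:ℕ) = 2^2 by norm_num, ← pow_mul]; ring
    rw [e4]
    nlinarith [Nat.centralBinom_pos k]

lemma exists_noncol (r : ℕ) (hr : 1 ≤ r) :
    ∃ E : Finset (Finset ℕ), IsUniform r E ∧ ¬ Colorable2 E := by
  refine ⟨(Finset.range (2*r-1)).powersetCard r,
    fun e he => (Finset.mem_powersetCard.1 he).2, ?_⟩
  rintro ⟨χ, hχ⟩
  set T := (Finset.range (2*r-1)).filter (fun v => χ v = true) with hT
  set F := (Finset.range (2*r-1)).filter (fun v => ¬ (χ v = true)) with hF
  have hsum : T.card + F.card = 2*r-1 := by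
    rw [hT, hF, Finset.card_filter_add_card_filter_not, Finset.card_range]
  rcases le_or_gt r T.card with h | h
  · obtain ⟨e, heT, hecard⟩ := Finset.exists_subset_card_eq h
    have he : e ∈ (Finset.range (2*r-1)).powersetCard r :=
      Finset.mem_powersetCard.2 ⟨heT.trans (Finset.filter_subset _ _), hecard⟩
    obtain ⟨-, v, hv, hvf⟩ := hχ e he
    have := (Finset.mem_filter.1 (heT hv)).2
    simp [this] at hvf
  · have hFc : r ≤ F.card := by omega
    obtain ⟨e, heF, hecard⟩ := Finset.exists_subset_card_eq hFc
    have he : e ∈ (Finset.range (2*r-1)).powersetCard r :=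
      Finset.mem_powersetCard.2 ⟨heF.trans (Finset.filter_subset _ _), hecard⟩
    obtain ⟨⟨v, hv, hvt⟩, -⟩ := hχ e he
    have := (Finset.mem_filter.1 (heF hv)).2
    simp [hvt] at this

lemma noncol_shift {E : Finset (Finset ℕ)} (c : ℕ) (h : ¬ Colorable2 E) :
    ¬ Colorable2 (E.image (fun e => e.image (fun v => v + c))) := by
  rintro ⟨χ, hχ⟩
  refine h ⟨fun v => χ (v + c), fun e he => ?_⟩
  obtain ⟨⟨v, hv, hvt⟩, ⟨w, hw, hwf⟩⟩ :=
    hχ (e.image (fun v => v + c)) (Finset.mem_image_of_mem _ he)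
  obtain ⟨v', hv', rfl⟩ := Finset.mem_image.1 hv
  obtain ⟨w', hw', rfl⟩ := Finset.mem_image.1 hw
  exact ⟨⟨v', hv', hvt⟩, ⟨w', hw', hwf⟩⟩




/-- First improved recurrence (even case): for even `n ≥ 4`,
`m n ≤ (n+1)·2^(n-2) + C(n,n/2)/2 + (n-1)·(m(n-2) + C(n-2,(n-2)/2))`. -/
theorem first_improvement_even (n : ℕ) (hn : 4 ≤ n) (heven : Even n) :
    m n ≤ (n + 1) * 2 ^ (n - 2) + Nat.choose n (n / 2) / 2
      + (n - 1) * (m (n - 2) + Nat.choose (n - 2) ((n - 2) / 2)) := by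
  obtain ⟨q, hq⟩ : ∃ q, n = 2*q+4 := by
    obtain ⟨s, hs⟩ := heven; exact ⟨s - 2, by omega⟩
  have hne : {k | ∃ E : Finset (Finset ℕ),
      IsUniform (n-2) E ∧ ¬ Colorable2 E ∧ E.card = k}.Nonempty := by
    obtain ⟨E, h1, h2⟩ := exists_noncol (n-2) (by omega)
    exact ⟨E.card, E, h1, h2, rfl⟩
  obtain ⟨B₀, hB₀u, hB₀n, hB₀c⟩ := Nat.sInf_mem hne
  set B := B₀.image (fun e => e.image (fun v => v + 2*n)) with hBdef
  have himginj : Function.Injective (fun v : ℕ => v + 2*n) := fun a b h => by simpa using h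
  have hBcard : B.card = m (n-2) := by
    rw [hBdef, Finset.card_image_of_injective _ (Finset.image_injective himginj)]
    exact hB₀c
  have hBu : IsUniform (n-2) B := by
    intro e he
    obtain ⟨e', he', rfl⟩ := Finset.mem_image.1 he
    rw [Finset.card_image_of_injective _ himginj]
    exact hB₀u e' he'
  have hBn : ¬ Colorable2 B := noncol_shift _ hB₀n
  have hBv : ∀ e ∈ B, ∀ v ∈ e, 2*n ≤ v := by
    intro e he v hv
    obtain ⟨e', he', rfl⟩ := Finset.mem_image.1 he
    obtain ⟨w, hw, rfl⟩ := Finset.mem_image.1 hv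
    omega
  have hHle : m n ≤ (FIE.H n B).card :=
    Nat.sInf_le ⟨FIE.H n B, FIE.H_uniform n hn B hBu hBv, FIE.H_noncol n hn B hBn, rfl⟩
  have hcard := FIE.H_card n B
  rw [hBcard] at hcard
  have hkey : 2^(n-1) ≤ Nat.choose n (n/2) / 2 + (n-1) * Nat.choose (n-2) ((n-2)/2) := by
    have h := key_binom (q+1) (by omega)
    have e1 : Nat.centralBinom (q+2) = Nat.choose n (n/2) := by
      rw [Nat.centralBinom_eq_two_mul_choose]
      congr 1 <;> omega
    have e2 : Nat.centralBinom (q+1) = Nat.choose (n-2) ((n-2)/2) := by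
      rw [Nat.centralBinom_eq_two_mul_choose]
      congr 1 <;> omega
    have e3 : 2*(q+1)+1 = n-1 := by omega
    have e4 : q + 1 + 1 = q + 2 := by omega
    rw [e4, e3, e1, e2] at h
    exact h
  have p1 : (2:ℕ)^n = 2^(n-2)*4 := by
    have h : n - 2 + 2 = n := by omega
    calc (2:ℕ)^n = 2^(n-2+2) := by rw [h]
    _ = 2^(n-2)*2^2 := pow_add 2 _ 2
    _ = 2^(n-2)*4 := by norm_num
  have p2 : (2:ℕ)^(n-1) = 2^(n-2)*2 := by
    have h : n - 2 + 1 = n - 1 := by omega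
    calc (2:ℕ)^(n-1) = 2^(n-2+1) := by rw [h]
    _ = 2^(n-2)*2 := pow_succ 2 _
  rw [p2] at hkey
  rw [p1] at hcard
  refine le_trans hHle (le_trans hcard ?_)
  have hsplit : (n+1) * 2^(n-2) = (n-1) * 2^(n-2) + 2^(n-2)*2 := by
    have h : n + 1 = (n-1) + 2 := by omega
    rw [h, Nat.add_mul]; ring
  rw [hsplit, Nat.mul_add]
  have hcomm : m (n-2) * (n-1) = (n-1) * m (n-2) := Nat.mul_comm _ _
  rw [hcomm]
  -- goal: 2^(n-2)*4 + (n-1)*m(n-2) + (n-1)*2^(n-2)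
  --   ≤ (n-1)*2^(n-2) + 2^(n-2)*2 + C/2 + ((n-1)*m(n-2) + (n-1)*C')
  omega
end
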